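/- arXiv:2204.05777 — 9 statements merged into one kernel-verified Lean document; each statement's English description precedes it below -/
import Mathlib

section
/- Let Δ be an abstract simplicial complex on [n] and b ⊆ [n]. Define Ñ_b(Δ) = {F ∈ Δ : F ∩ b = ∅, F ∪ b ∉ Δ, and there exists b' ⊊ b with F ∪ b' ∉ Δ}. Then every inclusion-minimal element of Ñ_b(Δ) is of the form C \ b for some minimal nonface C of Δ with C ∩ b ≠ ∅ and b ⊄ C. -/
def IsComplex {n : ℕ} (Δ : Set (Finset (Fin n))) : Prop :=
  Δ.Nonempty ∧ ∀ F ∈ Δ, ∀ G ⊆ F, G ∈ Δ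

def IsMatroid {n : ℕ} (Δ : Set (Finset (Fin n))) : Prop :=
  IsComplex Δ ∧ ∀ I ∈ Δ, ∀ J ∈ Δ, J.card < I.card → ∃ v ∈ I, v ∉ J ∧ insert v J ∈ Δ

def MinNonface {n : ℕ} (Δ : Set (Finset (Fin n))) (C : Finset (Fin n)) : Prop :=
  C ∉ Δ ∧ ∀ A ⊂ C, A ∈ Δ

def Ndel {n : ℕ} (Δ : Set (Finset (Fin n))) (b : Finset (Fin n)) : Set (Finset (Fin n)) :=
  {F | F ∈ Δ ∧ F ∩ b = ∅ ∧ F ∪ b ∉ Δ}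

def NdelRed {n : ℕ} (Δ : Set (Finset (Fin n))) (b : Finset (Fin n)) : Set (Finset (Fin n)) :=
  {F | F ∈ Ndel Δ b ∧ ∃ b' ⊂ b, F ∪ b' ∉ Δ}

def Deletion {n : ℕ} (Δ : Set (Finset (Fin n))) (b : Finset (Fin n)) : Set (Finset (Fin n)) :=
  {F | F ∈ Δ ∧ F ∩ b = ∅}

def Link {n : ℕ} (Δ : Set (Finset (Fin n))) (b : Finset (Fin n)) : Set (Finset (Fin n)) :=
  {F | F ∈ Δ ∧ F ∩ b = ∅ ∧ F ∪ b ∈ Δ}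

def IsBasisOf {n : ℕ} (Γ : Set (Finset (Fin n))) (B : Finset (Fin n)) : Prop :=
  B ∈ Γ ∧ ∀ F ∈ Γ, B ⊆ F → F = B

def MinimalIn {n : ℕ} (S : Set (Finset (Fin n))) (F : Finset (Fin n)) : Prop :=
  F ∈ S ∧ ∀ G ∈ S, G ⊆ F → G = F

def MaximalIn {n : ℕ} (S : Set (Finset (Fin n))) (F : Finset (Fin n)) : Prop :=
  F ∈ S ∧ ∀ G ∈ S, F ⊆ G → G = F

lemma exists_minNonface {n : ℕ} (Δ : Set (Finset (Fin n))) :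
    ∀ A : Finset (Fin n), A ∉ Δ → ∃ C ⊆ A, MinNonface Δ C := by
  intro A
  induction A using Finset.strongInduction with
  | _ A ih =>
    intro hA
    by_cases h : ∀ B ⊂ A, B ∈ Δ
    · exact ⟨A, subset_rfl, hA, h⟩
    · push_neg at h
      obtain ⟨B, hB, hBn⟩ := h
      obtain ⟨C, hC, hCm⟩ := ih B hB hBn
      exact ⟨C, hC.trans hB.subset, hCm⟩

theorem stmt1 (n : ℕ) (Δ : Set (Finset (Fin n))) (hΔ : IsComplex Δ)
    (b F : Finset (Fin n)) (hF : MinimalIn (NdelRed Δ b) F) :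
    ∃ C, MinNonface Δ C ∧ (C ∩ b).Nonempty ∧ ¬ b ⊆ C ∧ F = C \ b := by
  obtain ⟨⟨⟨hFΔ, hFb, hFub⟩, b', hb'b, hFb'⟩, hmin⟩ := hF
  obtain ⟨C, hCsub, hCnf⟩ := exists_minNonface Δ (F ∪ b') hFb'
  have hCF : C \ b ⊆ F := by
    intro x hx
    obtain ⟨hxC, hxb⟩ := Finset.mem_sdiff.mp hx
    rcases Finset.mem_union.mp (hCsub hxC) with h1 | h1
    · exact h1
    · exact absurd (hb'b.1 h1) hxb
  have hCb : (C ∩ b).Nonempty := by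
    by_contra h
    rw [Finset.not_nonempty_iff_eq_empty] at h
    have hsub : C ⊆ F := by
      intro x hx
      have : x ∉ b := fun hxb =>
        (Finset.eq_empty_iff_forall_notMem.mp h) x (Finset.mem_inter.mpr ⟨hx, hxb⟩)
      exact hCF (Finset.mem_sdiff.mpr ⟨hx, this⟩)
    exact hCnf.1 (hΔ.2 F hFΔ C hsub)
  have hbC : ¬ b ⊆ C := by
    intro h
    have hbb' : b ⊆ b' := by
      intro x hx
      rcases Finset.mem_union.mp (hCsub (h hx)) with h1 | h1
      · exact absurd (Finset.mem_inter.mpr ⟨h1, hx⟩)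
          (by rw [hFb]; exact Finset.notMem_empty x)
      · exact h1
    exact (Finset.ssubset_def.mp hb'b).2 hbb'
  refine ⟨C, hCnf, hCb, hbC, ?_⟩
  have hmem : C \ b ∈ NdelRed Δ b := by
    refine ⟨⟨hΔ.2 F hFΔ _ hCF, Finset.sdiff_inter_self _ _, ?_⟩, C ∩ b, ?_, ?_⟩
    · intro hin
      exact hCnf.1 (hΔ.2 _ hin C (fun x hx => by
        by_cases hxb : x ∈ b
        · exact Finset.mem_union_right _ hxb
        · exact Finset.mem_union_left _ (Finset.mem_sdiff.mpr ⟨hx, hxb⟩)))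
    · obtain ⟨x, hxb, hxC⟩ := Finset.not_subset.mp hbC
      exact Finset.ssubset_iff_of_subset Finset.inter_subset_right |>.mpr
        ⟨x, hxb, fun hxI => hxC (Finset.mem_inter.mp hxI).1⟩
    · rw [Finset.sdiff_union_inter]
      exact hCnf.1
  exact (hmin _ hmem hCF).symm
end

section
/- Let Δ be a simplicial complex on [n] and b ⊆ [n]. Then Ñ_b(Δ) = ∅ if and only if for every minimal nonface C of Δ, the set b is either contained in C or disjoint from C. -/
/-! If a minimal nonface `C` meets `b` without containing it, then `C \ b` is a face missing `b`
whose union with the proper part `C ∩ b` of `b` is the nonface `C`. Conversely, if `F ∪ b'` is a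
nonface for a face `F` missing `b` and some `b' ⊂ b`, a minimal nonface inside `F ∪ b'` meets `b'`
because `F` is a face, and cannot contain `b` because `F` misses `b`. -/

open Finset

lemma IsComplex.mem_of_subset {n : ℕ} {Δ : Set (Finset (Fin n))} (hΔ : IsComplex Δ)
    {F G : Finset (Fin n)} (hF : F ∈ Δ) (hGF : G ⊆ F) : G ∈ Δ :=
  hΔ.2 F hF G hGF

lemma exists_minNonface_subset {n : ℕ} {Δ : Set (Finset (Fin n))} {S : Finset (Fin n)}
    (hS : S ∉ Δ) : ∃ C ⊆ S, MinNonface Δ C := by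
  obtain ⟨C, hCS, hC⟩ := exists_minimal_le_of_wellFoundedLT (· ∉ Δ) S hS
  exact ⟨C, hCS, hC.prop, fun A hA => not_not.1 (hC.not_prop_of_lt hA)⟩

lemma sdiff_mem_ndelRed {n : ℕ} {Δ : Set (Finset (Fin n))} (hΔ : IsComplex Δ)
    {b C : Finset (Fin n)} (hC : MinNonface Δ C) (hbC : ¬b ⊆ C) (hCb : (C ∩ b).Nonempty) :
    C \ b ∈ NdelRed Δ b := by
  have hsub : C \ b ⊂ C :=
    sdiff_lt_left.2 (not_disjoint_iff_nonempty_inter.2 (inter_comm C b ▸ hCb))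
  have hunion : C \ b ∪ b ∉ Δ := fun h =>
    hC.1 (hΔ.mem_of_subset h (by rw [sdiff_union_self_eq_union]; exact subset_union_left))
  refine ⟨⟨hC.2 _ hsub, sdiff_inter_self b C, hunion⟩, C ∩ b, ?_, ?_⟩
  · exact inter_subset_right.ssubset_of_ne fun h => hbC (h ▸ inter_subset_left)
  · rw [sdiff_union_inter]
    exact hC.1

lemma exists_minNonface_of_mem_ndelRed {n : ℕ} {Δ : Set (Finset (Fin n))} (hΔ : IsComplex Δ)
    {b F : Finset (Fin n)} (hF : F ∈ NdelRed Δ b) :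
    ∃ C, MinNonface Δ C ∧ ¬b ⊆ C ∧ (C ∩ b).Nonempty := by
  obtain ⟨⟨hFΔ, hFb, -⟩, b', hb', hFb'⟩ := hF
  obtain ⟨C, hCsub, hC⟩ := exists_minNonface_subset hFb'
  refine ⟨C, hC, fun hbC => ?_, ?_⟩
  · obtain ⟨x, hxb, hxb'⟩ := exists_of_ssubset hb'
    rcases mem_union.1 (hCsub (hbC hxb)) with hxF | hxb''
    · exact notMem_empty x (hFb ▸ mem_inter.2 ⟨hxF, hxb⟩)
    · exact hxb' hxb''
  · by_contra hdisj
    rw [not_nonempty_iff_eq_empty, ← disjoint_iff_inter_eq_empty] at hdisj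
    have hCF : C ⊆ F := fun x hx => (mem_union.1 (hCsub hx)).resolve_right
      fun hxb' => disjoint_left.1 hdisj hx (hb'.subset hxb')
    exact hC.1 (hΔ.mem_of_subset hFΔ hCF)

lemma ndelRed_nonempty_iff {n : ℕ} {Δ : Set (Finset (Fin n))} (hΔ : IsComplex Δ)
    (b : Finset (Fin n)) :
    (NdelRed Δ b).Nonempty ↔ ∃ C, MinNonface Δ C ∧ ¬b ⊆ C ∧ (C ∩ b).Nonempty :=
  ⟨fun ⟨_, hF⟩ => exists_minNonface_of_mem_ndelRed hΔ hF,
    fun ⟨_, hC, hbC, hCb⟩ => ⟨_, sdiff_mem_ndelRed hΔ hC hbC hCb⟩⟩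

theorem stmt2 (n : ℕ) (Δ : Set (Finset (Fin n))) (hΔ : IsComplex Δ)
    (b : Finset (Fin n)) :
    NdelRed Δ b = ∅ ↔ ∀ C, MinNonface Δ C → b ⊆ C ∨ C ∩ b = ∅ := by
  rw [← Set.not_nonempty_iff_eq_empty, ndelRed_nonempty_iff hΔ]
  simp only [not_exists, not_and, ← not_nonempty_iff_eq_empty, or_iff_not_imp_left]
end

section
/- Let M be a matroid on ground set [n] (a nonempty simplicial complex whose faces satisfy the independent set exchange axiom), let b ⊆ [n], let B₁ and B₂ be bases (inclusion-maximal independent sets) of the deletion M \ b = {F ∈ M : F ∩ b = ∅}, and let b' ⊆ b. Then B₁ ∪ b' ∈ M if and only if B₂ ∪ b' ∈ M. -/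
lemma stmt5_aux {n : ℕ} {M : Set (Finset (Fin n))} (hM : IsMatroid M)
    {b B₁ B₂ b' : Finset (Fin n)}
    (h₁ : IsBasisOf (Deletion M b) B₁) (h₂ : IsBasisOf (Deletion M b) B₂)
    (hb' : b' ⊆ b) (h : B₁ ∪ b' ∈ M) : B₂ ∪ b' ∈ M := by
  classical
  obtain ⟨⟨hΔne, hdown⟩, hex⟩ := hM
  have hB1M : B₁ ∈ M := h₁.1.1
  have hB2M : B₂ ∈ M := h₂.1.1
  have hB1b : B₁ ∩ b = ∅ := h₁.1.2
  have hB2b : B₂ ∩ b = ∅ := h₂.1.2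
  have hdisj : ∀ (C : Finset (Fin n)), C ∩ b = ∅ → ∀ v ∈ C, v ∉ b := by
    intro C hC v hv hvb
    have : v ∈ C ∩ b := Finset.mem_inter.mpr ⟨hv, hvb⟩
    simp [hC] at this
  -- bases of the deletion have equal cardinality
  have key : ∀ C D : Finset (Fin n), IsBasisOf (Deletion M b) C →
      IsBasisOf (Deletion M b) D → ¬ D.card < C.card := by
    intro C D hC hD hlt
    obtain ⟨v, hvC, hvD, hins⟩ := hex C hC.1.1 D hD.1.1 hlt
    have hv : v ∉ b := hdisj C hC.1.2 v hvC
    have hmem : insert v D ∈ Deletion M b :=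
      ⟨hins, by rw [Finset.insert_inter_of_notMem hv, hD.1.2]⟩
    have := hD.2 _ hmem (Finset.subset_insert _ _)
    exact hvD (this ▸ Finset.mem_insert_self v D)
  have hcard : B₁.card = B₂.card :=
    le_antisymm (not_lt.1 (key B₁ B₂ h₁ h₂)) (not_lt.1 (key B₂ B₁ h₂ h₁))
  -- maximum-cardinality independent J with B₂ ⊆ J ⊆ B₁ ∪ B₂ ∪ b'
  set X := B₁ ∪ B₂ ∪ b' with hX
  let s : Finset (Finset (Fin n)) :=
    X.powerset.filter (fun I => I ∈ M ∧ B₂ ⊆ I)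
  have hB2s : B₂ ∈ s := by
    simp only [s, Finset.mem_filter, Finset.mem_powerset]
    exact ⟨by intro x hx; simp [hX, hx], hB2M, subset_rfl⟩
  obtain ⟨J, hJs, hJmax⟩ := s.exists_max_image Finset.card ⟨B₂, hB2s⟩
  simp only [s, Finset.mem_filter, Finset.mem_powerset] at hJs
  obtain ⟨hJX, hJM, hB2J⟩ := hJs
  -- J has large cardinality
  have hb'B1 : Disjoint B₁ b' := by
    rw [Finset.disjoint_right]
    intro v hv
    exact fun hvB => hdisj B₁ hB1b v hvB (hb' hv)
  have hb'B2 : Disjoint B₂ b' := by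
    rw [Finset.disjoint_right]
    intro v hv
    exact fun hvB => hdisj B₂ hB2b v hvB (hb' hv)
  have hJbig : B₁.card + b'.card ≤ J.card := by
    by_contra hlt
    push_neg at hlt
    rw [← Finset.card_union_of_disjoint hb'B1] at hlt
    obtain ⟨v, hvI, hvJ, hins⟩ := hex (B₁ ∪ b') h J hJM hlt
    have hmem : insert v J ∈ s := by
      simp only [s, Finset.mem_filter, Finset.mem_powerset]
      refine ⟨Finset.insert_subset ?_ hJX, hins, hB2J.trans (Finset.subset_insert _ _)⟩
      rcases Finset.mem_union.1 hvI with hv | hv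
      · exact Finset.mem_union_left _ (Finset.mem_union_left _ hv)
      · exact Finset.mem_union_right _ hv
    have := hJmax _ hmem
    rw [Finset.card_insert_of_notMem hvJ] at this
    omega
  -- J ∩ b ⊆ b'
  have hJb : ∀ v ∈ J, v ∈ b → v ∈ b' := by
    intro v hv hvb
    rcases Finset.mem_union.1 (hJX hv) with hv' | hv'
    · rcases Finset.mem_union.1 hv' with hv'' | hv''
      · exact absurd hvb (hdisj B₁ hB1b v hv'')
      · exact absurd hvb (hdisj B₂ hB2b v hv'')
    · exact hv'
  -- J \ b is a member of the deletion containing B₂, hence equals B₂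
  have hsd : J \ b = B₂ := by
    have hmem : J \ b ∈ Deletion M b := by
      refine ⟨hdown J hJM _ (Finset.sdiff_subset), ?_⟩
      ext x
      simp [Finset.mem_sdiff, Finset.mem_inter]
    refine h₂.2 _ hmem ?_
    intro x hx
    exact Finset.mem_sdiff.mpr ⟨hB2J hx, hdisj B₂ hB2b x hx⟩
  have hJsub : J ⊆ B₂ ∪ b' := by
    intro x hx
    by_cases hxb : x ∈ b
    · exact Finset.mem_union_right _ (hJb x hx hxb)
    · exact Finset.mem_union_left _ (hsd ▸ Finset.mem_sdiff.mpr ⟨hx, hxb⟩)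
  have heq : J = B₂ ∪ b' := by
    apply Finset.eq_of_subset_of_card_le hJsub
    rw [Finset.card_union_of_disjoint hb'B2]
    omega
  rw [← heq]
  exact hJM

theorem stmt5 (n : ℕ) (M : Set (Finset (Fin n))) (hM : IsMatroid M)
    (b B₁ B₂ b' : Finset (Fin n))
    (h₁ : IsBasisOf (Deletion M b) B₁) (h₂ : IsBasisOf (Deletion M b) B₂)
    (hb' : b' ⊆ b) :
    B₁ ∪ b' ∈ M ↔ B₂ ∪ b' ∈ M :=
  ⟨stmt5_aux hM h₁ h₂ hb', stmt5_aux hM h₂ h₁ hb'⟩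
end

section
/- Let M be a matroid on [n] and b ⊆ [n]. If Ñ_b(M) = {F ∈ M : F ∩ b = ∅, F ∪ b ∉ M, ∃ b' ⊊ b with F ∪ b' ∉ M} is nonempty, then every basis of the deletion M \ b belongs to Ñ_b(M). -/
lemma grow {n : ℕ} {M : Set (Finset (Fin n))} (hM : IsMatroid M) :
    ∀ (k : ℕ) (J : Finset (Fin n)), J ∈ M → ∀ I ∈ M, I.card - J.card = k →
    J.card ≤ I.card →
    ∃ J' ∈ M, J ⊆ J' ∧ J' ⊆ J ∪ I ∧ J'.card = I.card := by
  intro k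
  induction k with
  | zero =>
    intro J hJ I hI hk hle
    exact ⟨J, hJ, subset_rfl, Finset.subset_union_left, by omega⟩
  | succ m ih =>
    intro J hJ I hI hk hle
    have hlt : J.card < I.card := by omega
    obtain ⟨v, hvI, hvJ, hins⟩ := hM.2 I hI J hJ hlt
    have hc : (insert v J).card = J.card + 1 := Finset.card_insert_of_notMem hvJ
    obtain ⟨J', hJ'M, hsub, hsub2, hcard⟩ :=
      ih (insert v J) hins I hI (by omega) (by omega)
    refine ⟨J', hJ'M, (Finset.subset_insert v J).trans hsub, hsub2.trans ?_, hcard⟩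
    intro x hx
    rcases Finset.mem_union.mp hx with h1 | h2
    · rcases Finset.mem_insert.mp h1 with rfl | hxJ
      · exact Finset.mem_union_right _ hvI
      · exact Finset.mem_union_left _ hxJ
    · exact Finset.mem_union_right _ h2

lemma card_le_basis {n : ℕ} {M : Set (Finset (Fin n))} (hM : IsMatroid M)
    {b B G : Finset (Fin n)} (hB : IsBasisOf (Deletion M b) B)
    (hG : G ∈ Deletion M b) : G.card ≤ B.card := by
  by_contra hlt
  push_neg at hlt
  obtain ⟨v, hvG, hvB, hins⟩ := hM.2 G hG.1 B hB.1.1 hlt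
  have hmem : insert v B ∈ Deletion M b := by
    refine ⟨hins, ?_⟩
    have hvb : v ∉ b := by
      intro hvb
      have : v ∈ G ∩ b := Finset.mem_inter.mpr ⟨hvG, hvb⟩
      rw [hG.2] at this
      exact absurd this (Finset.notMem_empty v)
    have hBb := hB.1.2
    ext x
    simp only [Finset.mem_inter, Finset.mem_insert, Finset.notMem_empty, iff_false]
    rintro ⟨rfl | hxB, hxb⟩
    · exact hvb hxb
    · have : x ∈ B ∩ b := Finset.mem_inter.mpr ⟨hxB, hxb⟩
      rw [hBb] at this
      exact Finset.notMem_empty x this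
  have := hB.2 _ hmem (Finset.subset_insert v B)
  exact hvB (this ▸ Finset.mem_insert_self v B)

lemma key {n : ℕ} {M : Set (Finset (Fin n))} (hM : IsMatroid M)
    {b B X c : Finset (Fin n)} (hB : IsBasisOf (Deletion M b) B)
    (hX : X ∈ Deletion M b) (hc : c ⊆ b) (hXc : X ∪ c ∉ M) : B ∪ c ∉ M := by
  intro hBc
  have hdisj : Disjoint B c := by
    rw [Finset.disjoint_left]
    intro x hxB hxc
    have : x ∈ B ∩ b := Finset.mem_inter.mpr ⟨hxB, hc hxc⟩
    rw [hB.1.2] at this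
    exact Finset.notMem_empty x this
  have hcardBc : (B ∪ c).card = B.card + c.card := Finset.card_union_of_disjoint hdisj
  have hXle : X.card ≤ B.card := card_le_basis hM hB hX
  obtain ⟨J', hJ'M, hXJ', hJ'sub, hcard⟩ :=
    grow hM ((B ∪ c).card - X.card) X hX.1 (B ∪ c) hBc rfl (by omega)
  -- J' ∩ b ⊆ c
  have h3 : J' ∩ b ⊆ c := by
    intro x hx
    obtain ⟨hxJ', hxb⟩ := Finset.mem_inter.mp hx
    rcases Finset.mem_union.mp (hJ'sub hxJ') with hxX | hxBc
    · exfalso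
      have : x ∈ X ∩ b := Finset.mem_inter.mpr ⟨hxX, hxb⟩
      rw [hX.2] at this
      exact Finset.notMem_empty x this
    · rcases Finset.mem_union.mp hxBc with hxB | hxc
      · exfalso
        have : x ∈ B ∩ b := Finset.mem_inter.mpr ⟨hxB, hxb⟩
        rw [hB.1.2] at this
        exact Finset.notMem_empty x this
      · exact hxc
  have h1 : J' \ b ∈ Deletion M b := by
    refine ⟨hM.1.2 J' hJ'M _ Finset.sdiff_subset, ?_⟩
    ext x
    simp only [Finset.mem_inter, Finset.mem_sdiff, Finset.notMem_empty, iff_false]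
    rintro ⟨⟨_, hxb⟩, hxb'⟩
    exact hxb hxb'
  have h2 : (J' \ b).card ≤ B.card := card_le_basis hM hB h1
  have h4 : (J' ∩ b).card + (J' \ b).card = J'.card := Finset.card_inter_add_card_sdiff J' b
  have h5 : (J' ∩ b).card ≤ c.card := Finset.card_le_card h3
  have h6 : J' ∩ b = c := Finset.eq_of_subset_of_card_le h3 (by omega)
  have h7 : X ∪ c ⊆ J' := by
    apply Finset.union_subset hXJ'
    rw [← h6]
    exact Finset.inter_subset_left
  exact hXc (hM.1.2 J' hJ'M _ h7)

theorem stmt7 (n : ℕ) (M : Set (Finset (Fin n))) (hM : IsMatroid M)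
    (b : Finset (Fin n)) (h : (NdelRed M b).Nonempty) :
    ∀ B, IsBasisOf (Deletion M b) B → B ∈ NdelRed M b := by
  obtain ⟨F, ⟨⟨hFM, hFb, hFub⟩, b₀, hb₀, hFb₀⟩⟩ := h
  intro B hB
  have hFdel : F ∈ Deletion M b := ⟨hFM, hFb⟩
  exact ⟨⟨hB.1.1, hB.1.2, key hM hB hFdel subset_rfl hFub⟩,
    b₀, hb₀, key hM hB hFdel hb₀.subset hFb₀⟩
end

section
/- Let M be a matroid on [n] and b ⊆ [n]. If Ñ_b(M) is nonempty, then the inclusion-maximal elements of N_b(M) coincide with the inclusion-maximal elements of Ñ_b(M). -/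
/-!
A set `F` maximal in `N_b(M)` is a basis of the deletion `M \ b`: anything independent that
avoids `b` and contains `F` stays in `N_b(M)`. Suppose `F ∪ b' ∈ M` for every `b' ⊊ b`.
Augmenting an independent `G` avoiding `b` up to the size of `F ∪ b'` must pick up all of `b'`,
because at most `|F|` elements of an independent set avoid `b`. Hence `G ∪ b' ∈ M` for all
`b' ⊊ b`, and `Ñ_b(M)` would be empty.
-/

namespace IsMatroid

variable {n : ℕ} {M : Set (Finset (Fin n))}

theorem mem_of_subset (hM : IsMatroid M) {F G : Finset (Fin n)} (hF : F ∈ M) (hGF : G ⊆ F) :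
    G ∈ M :=
  hM.1.2 F hF G hGF

theorem exists_augment (hM : IsMatroid M) {I J : Finset (Fin n)} (hI : I ∈ M) (hJ : J ∈ M)
    (hcard : J.card ≤ I.card) : ∃ K ∈ M, J ⊆ K ∧ K ⊆ J ∪ I ∧ K.card = I.card := by
  obtain ⟨k, hk⟩ := Nat.exists_eq_add_of_le hcard
  induction k generalizing J with
  | zero => exact ⟨J, hJ, subset_rfl, Finset.subset_union_left, hk.symm⟩
  | succ k ih =>
    obtain ⟨v, hvI, hvJ, hvJM⟩ := hM.2 I hI J hJ (by omega)
    obtain ⟨K, hKM, hJK, hKI, hKcard⟩ :=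
      ih hvJM (by rw [Finset.card_insert_of_notMem hvJ]; omega)
        (by rw [Finset.card_insert_of_notMem hvJ]; omega)
    refine ⟨K, hKM, (Finset.subset_insert v J).trans hJK, hKI.trans ?_, hKcard⟩
    rw [Finset.insert_union]
    exact Finset.insert_subset (Finset.mem_union_right _ hvI) subset_rfl

theorem card_le_of_isBasisOf_deletion (hM : IsMatroid M) {b B J : Finset (Fin n)}
    (hB : IsBasisOf (Deletion M b) B) (hJ : J ∈ Deletion M b) : J.card ≤ B.card := by
  by_contra! hlt
  obtain ⟨v, hvJ, hvB, hvBM⟩ := hM.2 J hJ.1 B hB.1.1 hlt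
  have hvb : v ∉ b := Finset.disjoint_left.1 (Finset.disjoint_iff_inter_eq_empty.2 hJ.2) hvJ
  have hvBb : insert v B ∩ b = ∅ := by rw [Finset.insert_inter_of_notMem hvb, hB.1.2]
  exact hvB (hB.2 _ ⟨hvBM, hvBb⟩ (Finset.subset_insert v B) ▸ Finset.mem_insert_self v B)

theorem union_mem_of_isBasisOf_deletion (hM : IsMatroid M) {b B J s : Finset (Fin n)}
    (hB : IsBasisOf (Deletion M b) B) (hJ : J ∈ Deletion M b) (hsb : s ⊆ b) (hBs : B ∪ s ∈ M) :
    J ∪ s ∈ M := by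
  have hBb : Disjoint B b := Finset.disjoint_iff_inter_eq_empty.2 hB.1.2
  have hJb : Disjoint J b := Finset.disjoint_iff_inter_eq_empty.2 hJ.2
  have hBs_card : (B ∪ s).card = B.card + s.card :=
    Finset.card_union_of_disjoint (hBb.mono_right hsb)
  obtain ⟨K, hKM, hJK, hKJBs, hKcard⟩ := hM.exists_augment hBs hJ.1
    (by have := hM.card_le_of_isBasisOf_deletion hB hJ; omega)
  have hKb_sub : K ∩ b ⊆ s := by
    intro x hx
    obtain ⟨hxK, hxb⟩ := Finset.mem_inter.1 hx
    rcases Finset.mem_union.1 (hKJBs hxK) with hxJ | hxBs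
    · exact absurd hxb (Finset.disjoint_left.1 hJb hxJ)
    · rcases Finset.mem_union.1 hxBs with hxB | hxs
      · exact absurd hxb (Finset.disjoint_left.1 hBb hxB)
      · exact hxs
  -- `K \ b` avoids `b`, so it is no larger than the basis `B`; the rest of `K` must be all of `s`.
  have hKb_card : (K \ b).card ≤ B.card :=
    hM.card_le_of_isBasisOf_deletion hB
      ⟨hM.mem_of_subset hKM Finset.sdiff_subset, Finset.sdiff_inter_self b K⟩
  have hKb : K ∩ b = s := Finset.eq_of_subset_of_card_le hKb_sub
    (by have := Finset.card_inter_add_card_sdiff K b; omega)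
  exact hM.mem_of_subset hKM (Finset.union_subset hJK (hKb ▸ Finset.inter_subset_left))

end IsMatroid

section

variable {n : ℕ} {M : Set (Finset (Fin n))} {b F : Finset (Fin n)}

theorem IsComplex.isBasisOf_deletion_of_maximalIn_ndel (hM : IsComplex M)
    (hF : MaximalIn (Ndel M b) F) : IsBasisOf (Deletion M b) F := by
  refine ⟨⟨hF.1.1, hF.1.2.1⟩, fun J hJ hFJ => hF.2 J ⟨hJ.1, hJ.2, fun hJbM => hF.1.2.2 ?_⟩ hFJ⟩
  exact hM.2 _ hJbM _ (Finset.union_subset_union_left hFJ)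

theorem IsComplex.maximalIn_ndel_of_maximalIn_ndelRed (hM : IsComplex M)
    (hF : MaximalIn (NdelRed M b) F) : MaximalIn (Ndel M b) F := by
  obtain ⟨⟨hFN, b', hb'b, hFb'⟩, hFmax⟩ := hF
  refine ⟨hFN, fun H hH hFH => hFmax H ⟨hH, b', hb'b, fun hHb' => hFb' ?_⟩ hFH⟩
  exact hM.2 _ hHb' _ (Finset.union_subset_union_left hFH)

theorem IsMatroid.mem_ndelRed_of_maximalIn_ndel (hM : IsMatroid M) {G : Finset (Fin n)}
    (hG : G ∈ NdelRed M b) (hF : MaximalIn (Ndel M b) F) : F ∈ NdelRed M b := by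
  obtain ⟨⟨hGM, hGb, -⟩, b', hb'b, hGb'⟩ := hG
  refine ⟨hF.1, b', hb'b, fun hFb' => hGb' ?_⟩
  exact hM.union_mem_of_isBasisOf_deletion (hM.1.isBasisOf_deletion_of_maximalIn_ndel hF)
    ⟨hGM, hGb⟩ hb'b.subset hFb'

end

theorem stmt8 (n : ℕ) (M : Set (Finset (Fin n))) (hM : IsMatroid M)
    (b : Finset (Fin n)) (h : (NdelRed M b).Nonempty) :
    ∀ F, MaximalIn (Ndel M b) F ↔ MaximalIn (NdelRed M b) F := by
  obtain ⟨G, hG⟩ := h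
  intro F
  constructor
  · intro hF
    exact ⟨hM.mem_ndelRed_of_maximalIn_ndel hG hF, fun H hH hFH => hF.2 H hH.1 hFH⟩
  · exact hM.1.maximalIn_ndel_of_maximalIn_ndelRed
end

section
/- Let Δ be a nonempty simplicial complex on [n]. If Δ is a matroid, then for every b ⊆ [n] such that each minimal nonface of Δ either contains b or is disjoint from b, every element of N_b(Δ) contains a unique inclusion-minimal element of N_b(Δ). -/
theorem stmt9 (n : ℕ) (Δ : Set (Finset (Fin n))) (hΔ : IsMatroid Δ)
    (b : Finset (Fin n)) (h : ∀ C, MinNonface Δ C → b ⊆ C ∨ C ∩ b = ∅) :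
    ∀ F ∈ Ndel Δ b, ∃! X, MinimalIn (Ndel Δ b) X ∧ X ⊆ F := by
  classical
  obtain ⟨⟨_, hsub⟩, hexch⟩ := hΔ
  -- any nonface contains a minimal nonface
  have hmnf : ∀ S : Finset (Fin n), S ∉ Δ → ∃ C ⊆ S, MinNonface Δ C := by
    intro S hS
    obtain ⟨C, hC, hCmin⟩ := Finset.exists_min_image
      (S.powerset.filter (· ∉ Δ)) Finset.card ⟨S, by simp [hS]⟩
    simp only [Finset.mem_filter, Finset.mem_powerset] at hC
    refine ⟨C, hC.1, hC.2, ?_⟩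
    intro A hA
    by_contra hAn
    have hle := hCmin A (by
      simp only [Finset.mem_filter, Finset.mem_powerset]
      exact ⟨hA.subset.trans hC.1, hAn⟩)
    exact absurd (Finset.card_lt_card hA) (not_lt.mpr hle)
  intro F hF
  obtain ⟨hFΔ, hFb, hFub⟩ := hF
  -- any dependent subset of F ∪ b contains b
  have key : ∀ D : Finset (Fin n), D ⊆ F ∪ b → D ∉ Δ → b ⊆ D := by
    intro D hD hDn
    obtain ⟨C, hCD, hCn, hCmin⟩ := hmnf D hDn
    rcases h C ⟨hCn, hCmin⟩ with hb | hdisj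
    · exact hb.trans hCD
    · exfalso
      apply hCn
      apply hsub F hFΔ
      intro x hx
      rcases Finset.mem_union.mp (hD (hCD hx)) with h1 | h1
      · exact h1
      · exact absurd (Finset.mem_inter.mpr ⟨hx, h1⟩) (by simp [hdisj])
  have hbne : b.Nonempty := by
    rcases Finset.eq_empty_or_nonempty b with rfl | hb
    · exact absurd (by simpa using hFΔ) hFub
    · exact hb
  -- existence: minimum-cardinality element of Ndel inside F
  obtain ⟨X, hX, hXmin⟩ := Finset.exists_min_image
    (F.powerset.filter (· ∈ Ndel Δ b)) Finset.card
    ⟨F, by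
      simp only [Finset.mem_filter, Finset.mem_powerset]
      exact ⟨subset_rfl, hFΔ, hFb, hFub⟩⟩
  simp only [Finset.mem_filter, Finset.mem_powerset] at hX
  have hXminimal : MinimalIn (Ndel Δ b) X := by
    refine ⟨hX.2, fun G hG hGX => ?_⟩
    refine Finset.eq_of_subset_of_card_le hGX (hXmin G ?_)
    simp only [Finset.mem_filter, Finset.mem_powerset]
    exact ⟨hGX.trans hX.1, hG⟩
  -- main uniqueness claim
  have main : ∀ P Q : Finset (Fin n), P ∈ Ndel Δ b → MinimalIn (Ndel Δ b) Q →
      P ⊆ F → Q ⊆ F → ∀ f ∈ Q, f ∉ P → False := by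
    intro P Q hP hQ hPF hQF f hfQ hfP
    obtain ⟨hPΔ, hPb, hPub⟩ := hP
    obtain ⟨⟨hQΔ, hQb, hQub⟩, hQmin⟩ := hQ
    obtain ⟨e, heb⟩ := hbne
    have hfb : f ∉ b := fun hfb =>
      absurd (Finset.mem_inter.mpr ⟨hfQ, hfb⟩) (by simp [hQb])
    have hef : e ≠ f := fun hef => hfb (hef ▸ heb)
    set I : Finset (Fin n) := (Q ∪ b).erase f with hI
    have hIeq : I = Q.erase f ∪ b := by
      rw [hI, Finset.erase_union_distrib, Finset.erase_eq_of_notMem hfb]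
    have hIΔ : I ∈ Δ := by
      rw [hIeq]
      by_contra hIn
      have hQe : Q.erase f ∈ Ndel Δ b := by
        refine ⟨hsub Q hQΔ _ (Finset.erase_subset f Q), ?_, hIn⟩
        rw [← Finset.subset_empty]
        intro x hx
        rw [← hQb]
        exact Finset.mem_inter.mpr ⟨Finset.erase_subset f Q (Finset.mem_inter.mp hx).1,
          (Finset.mem_inter.mp hx).2⟩
      have heq := hQmin _ hQe (Finset.erase_subset f Q)
      exact (Finset.erase_eq_self.mp heq) hfQ
    set U : Finset (Fin n) := P ∪ Q ∪ b with hU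
    have hIU : I ⊆ U := by
      intro x hx
      have hx' := Finset.erase_subset f (Q ∪ b) hx
      rcases Finset.mem_union.mp hx' with h1 | h1
      · exact Finset.mem_union.mpr (Or.inl (Finset.mem_union.mpr (Or.inr h1)))
      · exact Finset.mem_union.mpr (Or.inr h1)
    have hUF : U ⊆ F ∪ b := by
      intro x hx
      rcases Finset.mem_union.mp hx with h1 | h1
      · rcases Finset.mem_union.mp h1 with h2 | h2
        · exact Finset.mem_union.mpr (Or.inl (hPF h2))
        · exact Finset.mem_union.mpr (Or.inl (hQF h2))
      · exact Finset.mem_union.mpr (Or.inr h1)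
    -- maximal-cardinality independent extension of I inside U
    obtain ⟨J, hJ, hJmax⟩ := Finset.exists_max_image
      (U.powerset.filter (fun J => I ⊆ J ∧ J ∈ Δ)) Finset.card
      ⟨I, by
        simp only [Finset.mem_filter, Finset.mem_powerset]
        exact ⟨hIU, subset_rfl, hIΔ⟩⟩
    simp only [Finset.mem_filter, Finset.mem_powerset] at hJ
    obtain ⟨hJU, hIJ, hJΔ⟩ := hJ
    have hfJ : f ∉ J := by
      intro hfJ
      apply hQub
      apply hsub J hJΔ
      intro x hx
      by_cases hxf : x = f
      · exact hxf ▸ hfJ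
      · exact hIJ (Finset.mem_erase.mpr ⟨hxf, hx⟩)
    have hg : ∃ g ∈ P ∪ b, g ∉ J := by
      by_contra hgn
      push_neg at hgn
      exact hPub (hsub J hJΔ _ hgn)
    obtain ⟨g, hgPb, hgJ⟩ := hg
    have hgf : g ≠ f := by
      rintro rfl
      rcases Finset.mem_union.mp hgPb with h1 | h1
      · exact hfP h1
      · exact hfb h1
    have hgU : g ∈ U := by
      rcases Finset.mem_union.mp hgPb with h1 | h1
      · exact Finset.mem_union.mpr (Or.inl (Finset.mem_union.mpr (Or.inl h1)))
      · exact Finset.mem_union.mpr (Or.inr h1)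
    have hfU : f ∈ U := Finset.mem_union.mpr (Or.inl (Finset.mem_union.mpr (Or.inr hfQ)))
    have heU : e ∈ U := Finset.mem_union.mpr (Or.inr heb)
    set D : Finset (Fin n) := U.erase e with hD
    have hDΔ : D ∈ Δ := by
      by_contra hDn
      have hbD : b ⊆ D := key D ((Finset.erase_subset e U).trans hUF) hDn
      exact (Finset.notMem_erase e U) (hbD heb)
    -- cardinality facts
    have hcardD : D.card = U.card - 1 := Finset.card_erase_of_mem heU
    have hJsub : J ⊆ (U.erase f).erase g := by
      intro x hx
      exact Finset.mem_erase.mpr ⟨fun hxg => hgJ (hxg ▸ hx),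
        Finset.mem_erase.mpr ⟨fun hxf => hfJ (hxf ▸ hx), hJU hx⟩⟩
    have hcardJ : J.card ≤ U.card - 2 := by
      have h1 : ((U.erase f).erase g).card = U.card - 1 - 1 := by
        rw [Finset.card_erase_of_mem (Finset.mem_erase.mpr ⟨hgf, hgU⟩),
          Finset.card_erase_of_mem hfU]
      have := Finset.card_le_card hJsub
      omega
    have hU2 : 2 ≤ U.card := Finset.one_lt_card.mpr ⟨e, heU, f, hfU, hef⟩
    have hJD : J.card < D.card := by omega
    obtain ⟨v, hvD, hvJ, hvΔ⟩ := hexch D hDΔ J hJΔ hJD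
    have hvU : v ∈ U := Finset.erase_subset e U hvD
    have hmem : insert v J ∈ U.powerset.filter (fun J => I ⊆ J ∧ J ∈ Δ) := by
      simp only [Finset.mem_filter, Finset.mem_powerset]
      exact ⟨Finset.insert_subset hvU hJU, hIJ.trans (Finset.subset_insert v J), hvΔ⟩
    have hle := hJmax _ hmem
    rw [Finset.card_insert_of_notMem hvJ] at hle
    omega
  -- conclude
  refine ⟨X, ⟨hXminimal, hX.1⟩, ?_⟩
  rintro Y ⟨hYmin, hYF⟩
  by_cases hYX : Y ⊆ X
  · exact hXminimal.2 Y hYmin.1 hYX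
  · exfalso
    obtain ⟨f, hfY, hfX⟩ := Finset.not_subset.mp hYX
    exact main X Y hXminimal.1 hYmin hX.1 hYF f hfY hfX
end

section
/- Let Δ be a nonempty simplicial complex on [n]. If for every vertex v ∈ [n], every element of N_{v}(Δ) = {F ∈ Δ : v ∉ F, F ∪ {v} ∉ Δ} contains a unique inclusion-minimal element of N_{v}(Δ), then Δ is a matroid. -/
namespace Aux
variable {n : ℕ} {Δ : Set (Finset (Fin n))}

lemma us {n : ℕ} (s : Finset (Fin n)) (a : Fin n) : s ∪ {a} = insert a s := by
  rw [Finset.insert_eq, Finset.union_comm]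

lemma subset_mem (hΔ : IsComplex Δ) {F G : Finset (Fin n)} (hF : F ∈ Δ) (hGF : G ⊆ F) : G ∈ Δ :=
  hΔ.2 F hF G hGF

lemma exists_min (hΔ : IsComplex Δ) :
    ∀ F : Finset (Fin n), F ∉ Δ → ∃ C ⊆ F, MinNonface Δ C := by
  intro F
  induction F using Finset.strongInduction with
  | _ F IH =>
    intro hF
    by_cases hall : ∀ A ⊂ F, A ∈ Δ
    · exact ⟨F, subset_rfl, hF, hall⟩
    · push_neg at hall
      obtain ⟨A, hAF, hA⟩ := hall
      obtain ⟨C, hCA, hC⟩ := IH A hAF hA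
      exact ⟨C, hCA.trans hAF.subset, hC⟩

lemma minimalIn_erase (hΔ : IsComplex Δ) {C : Finset (Fin n)} {e : Fin n}
    (hC : MinNonface Δ C) (he : e ∈ C) : MinimalIn (Ndel Δ {e}) (C.erase e) := by
  constructor
  · refine ⟨hC.2 _ (Finset.erase_ssubset he), ?_, ?_⟩
    · ext x; simp only [Finset.mem_inter, Finset.mem_erase, Finset.mem_singleton, Finset.notMem_empty, iff_false, not_and]; rintro ⟨h, _⟩ rfl; exact h rfl
    · rw [Aux.us _ _, Finset.insert_erase he]; exact hC.1
  · rintro G ⟨hGΔ, hGe, hGeC⟩ hGsub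
    have hveG : e ∉ G := by
      intro hx
      have : e ∈ G ∩ {e} := Finset.mem_inter.2 ⟨hx, Finset.mem_singleton_self e⟩
      rw [hGe] at this; exact absurd this (Finset.notMem_empty e)
    have hsub : insert e G ⊆ C := by
      intro x hx
      rcases Finset.mem_insert.1 hx with rfl | hx
      · exact he
      · exact Finset.mem_of_mem_erase (hGsub hx)
    have heq : insert e G = C := by
      by_contra hne
      exact hGeC (by
        rw [Aux.us _ _]
        exact hC.2 _ (Finset.ssubset_iff_subset_ne.2 ⟨hsub, hne⟩))
    rw [← heq, Finset.erase_insert hveG]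

variable (h : ∀ v : Fin n, ∀ F ∈ Ndel Δ {v}, ∃! X, MinimalIn (Ndel Δ {v}) X ∧ X ⊆ F)

include h in
lemma circuit_unique (hΔ : IsComplex Δ) {J C₁ C₂ : Finset (Fin n)} {v : Fin n}
    (hJ : J ∈ Δ) (hv : v ∉ J)
    (h1 : MinNonface Δ C₁) (h1s : C₁ ⊆ insert v J)
    (h2 : MinNonface Δ C₂) (h2s : C₂ ⊆ insert v J) : C₁ = C₂ := by
  have hmem : ∀ {C : Finset (Fin n)}, MinNonface Δ C → C ⊆ insert v J → v ∈ C := by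
    intro C hC hCs
    by_contra hvC
    apply hC.1
    apply subset_mem hΔ hJ
    intro x hx
    rcases Finset.mem_insert.1 (hCs hx) with rfl | hx'
    · exact absurd hx hvC
    · exact hx'
  have hv1 := hmem h1 h1s
  have hv2 := hmem h2 h2s
  have hJN : J ∈ Ndel Δ {v} := by
    refine ⟨hJ, ?_, ?_⟩
    · ext x; simp only [Finset.mem_inter, Finset.mem_singleton, Finset.notMem_empty, iff_false, not_and]; rintro hx rfl; exact hv hx
    · rw [Aux.us _ _]
      exact fun hh => h1.1 (subset_mem hΔ hh h1s)
  obtain ⟨X, _, huniq⟩ := h v J hJN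
  have hes : ∀ {C : Finset (Fin n)}, C ⊆ insert v J → C.erase v ⊆ J := by
    intro C hCs x hx
    rcases Finset.mem_insert.1 (hCs (Finset.mem_of_mem_erase hx)) with rfl | hx'
    · exact absurd rfl (Finset.ne_of_mem_erase hx)
    · exact hx'
  have e1 := huniq _ ⟨minimalIn_erase hΔ h1 hv1, hes h1s⟩
  have e2 := huniq _ ⟨minimalIn_erase hΔ h2 hv2, hes h2s⟩
  rw [← Finset.insert_erase hv1, ← Finset.insert_erase hv2, e1, e2]

include h in
lemma elimination (hΔ : IsComplex Δ) {C₁ C₂ : Finset (Fin n)} {e : Fin n}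
    (h1 : MinNonface Δ C₁) (h2 : MinNonface Δ C₂)
    (hne : C₁ ≠ C₂) (he1 : e ∈ C₁) (he2 : e ∈ C₂) : (C₁ ∪ C₂).erase e ∉ Δ := by
  intro hD
  have hDN : (C₁ ∪ C₂).erase e ∈ Ndel Δ {e} := by
    refine ⟨hD, ?_, ?_⟩
    · ext x; simp only [Finset.mem_inter, Finset.mem_erase, Finset.mem_singleton, Finset.notMem_empty, iff_false, not_and]; rintro ⟨hx, _⟩ rfl; exact hx rfl
    · rw [Aux.us _ _, Finset.insert_erase (Finset.mem_union_left _ he1)]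
      exact fun hh => h1.1 (subset_mem hΔ hh Finset.subset_union_left)
  obtain ⟨X, _, huniq⟩ := h e _ hDN
  have e1 := huniq _ ⟨minimalIn_erase hΔ h1 he1,
    Finset.erase_subset_erase _ Finset.subset_union_left⟩
  have e2 := huniq _ ⟨minimalIn_erase hΔ h2 he2,
    Finset.erase_subset_erase _ Finset.subset_union_right⟩
  apply hne
  rw [← Finset.insert_erase he1, ← Finset.insert_erase he2, e1, e2]

end Aux

theorem aux_exchange (n : ℕ) (Δ : Set (Finset (Fin n))) (hΔ : IsComplex Δ)
    (h : ∀ v : Fin n, ∀ F ∈ Ndel Δ {v}, ∃! X, MinimalIn (Ndel Δ {v}) X ∧ X ⊆ F) :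
    IsComplex Δ ∧ ∀ I ∈ Δ, ∀ J ∈ Δ, J.card < I.card → ∃ v ∈ I, v ∉ J ∧ insert v J ∈ Δ := by
  refine ⟨hΔ, ?_⟩
  intro I hI
  suffices H : ∀ k (J : Finset (Fin n)), (J \ I).card = k → J ∈ Δ → J.card < I.card →
      ∃ v ∈ I, v ∉ J ∧ insert v J ∈ Δ by
    intro J hJ hcard; exact H _ J rfl hJ hcard
  intro k
  induction k using Nat.strong_induction_on with
  | _ k IH =>
  intro J hJk hJ hcard
  by_contra hcon
  push_neg at hcon
  obtain ⟨v, hvIJ⟩ : (I \ J).Nonempty := by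
    rw [Finset.sdiff_nonempty]
    intro hsub
    exact absurd (Finset.card_le_card hsub) (by omega)
  rw [Finset.mem_sdiff] at hvIJ
  obtain ⟨hvI, hvJ⟩ := hvIJ
  have hJvn : insert v J ∉ Δ := hcon v hvI hvJ
  obtain ⟨Cv, hCvs, hCv⟩ := Aux.exists_min hΔ _ hJvn
  have hvCv : v ∈ Cv := by
    by_contra hvc
    apply hCv.1
    apply Aux.subset_mem hΔ hJ
    intro x hx
    rcases Finset.mem_insert.1 (hCvs hx) with rfl | hx'
    · exact absurd hx hvc
    · exact hx'
  obtain ⟨w, hwCv, hwI⟩ : ∃ w ∈ Cv.erase v, w ∉ I := by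
    by_contra hc
    push_neg at hc
    apply hCv.1
    apply Aux.subset_mem hΔ hI
    intro x hx
    by_cases hxv : x = v
    · subst hxv; exact hvI
    · exact hc x (Finset.mem_erase.2 ⟨hxv, hx⟩)
  have hwv : w ≠ v := Finset.ne_of_mem_erase hwCv
  have hwJ : w ∈ J := by
    rcases Finset.mem_insert.1 (hCvs (Finset.mem_of_mem_erase hwCv)) with rfl | hx
    · exact absurd rfl hwv
    · exact hx
  set J' := (insert v J).erase w with hJ'def
  have hvJ' : v ∈ J' := Finset.mem_erase.2 ⟨hwv.symm, Finset.mem_insert_self _ _⟩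
  have hJ'Δ : J' ∈ Δ := by
    by_contra hJ'
    obtain ⟨C, hCs, hC⟩ := Aux.exists_min hΔ _ hJ'
    have hCeq : C = Cv := Aux.circuit_unique h hΔ hJ hvJ hC
      (hCs.trans (Finset.erase_subset _ _)) hCv hCvs
    subst hCeq
    exact Finset.notMem_erase w _ (hCs (Finset.mem_of_mem_erase hwCv))
  have hsubJ' : J' \ I ⊆ (J \ I).erase w := by
    intro x hx
    rw [Finset.mem_sdiff, hJ'def, Finset.mem_erase, Finset.mem_insert] at hx
    obtain ⟨⟨hxw, hx'⟩, hxI⟩ := hx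
    rcases hx' with rfl | hxJ
    · exact absurd hvI hxI
    · exact Finset.mem_erase.2 ⟨hxw, Finset.mem_sdiff.2 ⟨hxJ, hxI⟩⟩
  have hcardlt : (J' \ I).card < k := by
    have h1 := Finset.card_le_card hsubJ'
    have h2 : ((J \ I).erase w).card < (J \ I).card :=
      Finset.card_erase_lt_of_mem (Finset.mem_sdiff.2 ⟨hwJ, hwI⟩)
    omega
  have hJ'card : J'.card = J.card := by
    rw [hJ'def, Finset.card_erase_of_mem (Finset.mem_insert.2 (Or.inr hwJ)),
      Finset.card_insert_of_notMem hvJ]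
    omega
  obtain ⟨u, huI, huJ', hins⟩ := IH _ hcardlt J' rfl hJ'Δ (by omega)
  have huv : u ≠ v := fun hh => huJ' (hh ▸ hvJ')
  have huw : u ≠ w := by
    rintro rfl
    apply hJvn
    rwa [hJ'def, Finset.insert_erase (Finset.mem_insert.2 (Or.inr hwJ))] at hins
  have huJ : u ∉ J := by
    intro huJ
    exact huJ' (Finset.mem_erase.2 ⟨huw, Finset.mem_insert.2 (Or.inr huJ)⟩)
  have hJun : insert u J ∉ Δ := hcon u huI huJ
  obtain ⟨Cu, hCus, hCu⟩ := Aux.exists_min hΔ _ hJun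
  have hkey : (insert u (insert v J)).erase w = insert u J' :=
    Finset.erase_insert_of_ne huw
  have hwCu : w ∈ Cu := by
    by_contra hwc
    apply hCu.1
    apply Aux.subset_mem hΔ hins
    intro x hx
    rw [← hkey]
    refine Finset.mem_erase.2 ⟨fun hh => hwc (hh ▸ hx), ?_⟩
    rcases Finset.mem_insert.1 (hCus hx) with rfl | hx'
    · exact Finset.mem_insert_self _ _
    · exact Finset.mem_insert.2 (Or.inr (Finset.mem_insert.2 (Or.inr hx')))
  have hvCu : v ∉ Cu := by
    intro hvc
    rcases Finset.mem_insert.1 (hCus hvc) with hh | hh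
    · exact huv hh.symm
    · exact hvJ hh
  have hCne : Cu ≠ Cv := fun hh => hvCu (hh ▸ hvCv)
  apply Aux.elimination h hΔ hCu hCv hCne hwCu (Finset.mem_of_mem_erase hwCv)
  apply Aux.subset_mem hΔ hins
  intro x hx
  obtain ⟨hxw, hxm⟩ := Finset.mem_erase.1 hx
  rw [← hkey]
  refine Finset.mem_erase.2 ⟨hxw, ?_⟩
  rcases Finset.mem_union.1 hxm with hx' | hx'
  · rcases Finset.mem_insert.1 (hCus hx') with rfl | hx''
    · exact Finset.mem_insert_self _ _
    · exact Finset.mem_insert.2 (Or.inr (Finset.mem_insert.2 (Or.inr hx'')))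
  · exact Finset.mem_insert.2 (Or.inr (hCvs hx'))


theorem stmt10 (n : ℕ) (Δ : Set (Finset (Fin n))) (hΔ : IsComplex Δ)
    (h : ∀ v : Fin n, ∀ F ∈ Ndel Δ {v}, ∃! X, MinimalIn (Ndel Δ {v}) X ∧ X ⊆ F) :
    IsMatroid Δ := aux_exchange n Δ hΔ h
end

section
/- A nonempty simplicial complex Δ on [n] is a matroid if and only if for every vertex v ∈ [n], every element of N_v(Δ) = {F ∈ Δ : v ∉ F, F ∪ {v} ∉ Δ} contains a unique inclusion-minimal element of N_v(Δ). -/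
private lemma ndel_iff {n : ℕ} (Δ : Set (Finset (Fin n))) (v : Fin n) (F : Finset (Fin n)) :
    F ∈ Ndel Δ {v} ↔ F ∈ Δ ∧ v ∉ F ∧ insert v F ∉ Δ := by
  have hu : F ∪ {v} = insert v F := by ext x; simp [or_comm]
  constructor
  · rintro ⟨h1, h2, h3⟩
    refine ⟨h1, ?_, by rwa [hu] at h3⟩
    intro hv
    have : v ∈ F ∩ {v} := by simp [hv]
    rw [h2] at this; simp at this
  · rintro ⟨h1, h2, h3⟩
    refine ⟨h1, ?_, by rwa [hu]⟩
    ext x; simp only [Finset.mem_inter, Finset.mem_singleton, Finset.notMem_empty, iff_false,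
      not_and]
    rintro hx rfl; exact h2 hx

private lemma exists_minimal_below {n : ℕ} (N : Set (Finset (Fin n))) (F : Finset (Fin n))
    (hF : F ∈ N) : ∃ X, MinimalIn N X ∧ X ⊆ F := by
  classical
  obtain ⟨X, hXs, hXmin⟩ := Finset.exists_min_image (F.powerset.filter (fun G => G ∈ N))
    Finset.card ⟨F, by simp [hF]⟩
  simp only [Finset.mem_filter, Finset.mem_powerset] at hXs
  refine ⟨X, ⟨hXs.2, ?_⟩, hXs.1⟩
  intro G hG hGX
  exact Finset.eq_of_subset_of_card_le hGX
    (hXmin G (by simp [Finset.mem_filter, Finset.mem_powerset, hG, hGX.trans hXs.1]))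

private lemma exists_maximal_face {n : ℕ} (Δ : Set (Finset (Fin n))) (S F : Finset (Fin n))
    (hF : F ∈ Δ) (hFS : F ⊆ S) :
    ∃ B, F ⊆ B ∧ B ⊆ S ∧ B ∈ Δ ∧ ∀ G ∈ Δ, G ⊆ S → B ⊆ G → G = B := by
  classical
  obtain ⟨B, hBs, hBmax⟩ := Finset.exists_max_image
    (S.powerset.filter (fun G => G ∈ Δ ∧ F ⊆ G)) Finset.card ⟨F, by simp [hF, hFS]⟩
  simp only [Finset.mem_filter, Finset.mem_powerset] at hBs
  refine ⟨B, hBs.2.2, hBs.1, hBs.2.1, ?_⟩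
  intro G hG hGS hBG
  exact (Finset.eq_of_subset_of_card_le hBG
    (hBmax G (by simp [Finset.mem_filter, Finset.mem_powerset, hG, hGS, hBs.2.2.trans hBG]))).symm

private lemma card_le_of_maximal {n : ℕ} {Δ : Set (Finset (Fin n))} (hM : IsMatroid Δ)
    (S B C : Finset (Fin n)) (hB : B ∈ Δ) (hBS : B ⊆ S)
    (hBmax : ∀ G ∈ Δ, G ⊆ S → B ⊆ G → G = B) (hC : C ∈ Δ) (hCS : C ⊆ S) :
    C.card ≤ B.card := by
  by_contra h
  push_neg at h
  obtain ⟨v, hvC, hvB, hins⟩ := hM.2 C hC B hB h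
  have hsub : insert v B ⊆ S := by
    intro x hx
    rcases Finset.mem_insert.mp hx with rfl | hx
    · exact hCS hvC
    · exact hBS hx
  have := hBmax (insert v B) hins hsub (Finset.subset_insert v B)
  exact hvB (this ▸ Finset.mem_insert_self v B)

theorem stmt11 (n : ℕ) (Δ : Set (Finset (Fin n))) (hΔ : IsComplex Δ) :
    IsMatroid Δ ↔
      ∀ v : Fin n, ∀ F ∈ Ndel Δ {v}, ∃! X, MinimalIn (Ndel Δ {v}) X ∧ X ⊆ F := by
  constructor
  · -- matroid ⇒ unique minimal
    intro hM v F hF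
    obtain ⟨X, hXmin, hXF⟩ := exists_minimal_below _ F hF
    refine ⟨X, ⟨hXmin, hXF⟩, ?_⟩
    rintro Y ⟨hYmin, hYF⟩
    by_contra hne
    obtain ⟨hFΔ, hvF, hvFins⟩ := (ndel_iff Δ v F).mp hF
    obtain ⟨hXΔ, hvX, hvXins⟩ := (ndel_iff Δ v X).mp hXmin.1
    obtain ⟨hYΔ, hvY, hvYins⟩ := (ndel_iff Δ v Y).mp hYmin.1
    -- get x ∈ X \ Y
    have hnXY : ¬ X ⊆ Y := fun h => hne ((hYmin.2 X hXmin.1 h) ▸ rfl)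
    obtain ⟨x, hxX, hxY⟩ := Finset.not_subset.mp hnXY
    -- insert v (X ∩ Y) ∈ Δ
    have hXYΔ : X ∩ Y ∈ Δ := hΔ.2 F hFΔ _ ((Finset.inter_subset_left).trans hXF)
    have hWΔ : insert v (X ∩ Y) ∈ Δ := by
      by_contra hW
      have hmem : X ∩ Y ∈ Ndel Δ {v} := (ndel_iff Δ v _).mpr
        ⟨hXYΔ, fun h => hvX (Finset.mem_inter.mp h).1, hW⟩
      have := hXmin.2 _ hmem Finset.inter_subset_left
      exact hxY (Finset.mem_inter.mp (this ▸ hxX)).2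
    set S : Finset (Fin n) := insert v (X ∪ Y) with hS
    have hWS : insert v (X ∩ Y) ⊆ S := by
      apply Finset.insert_subset_insert
      exact (Finset.inter_subset_left).trans Finset.subset_union_left
    obtain ⟨B, hWB, hBS, hBΔ, hBmax⟩ := exists_maximal_face Δ S _ hWΔ hWS
    have hvXY : v ∉ X ∪ Y := fun h => hvF ((Finset.union_subset hXF hYF) h)
    have hXYmem : X ∪ Y ∈ Δ := hΔ.2 F hFΔ _ (Finset.union_subset hXF hYF)
    have hXYS : X ∪ Y ⊆ S := Finset.subset_insert v _
    have hXYmax : ∀ G ∈ Δ, G ⊆ S → X ∪ Y ⊆ G → G = X ∪ Y := by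
      intro G hG hGS hXYG
      by_cases hvG : v ∈ G
      · exfalso
        apply hvXins
        exact hΔ.2 G hG _ (Finset.insert_subset hvG (Finset.subset_union_left.trans hXYG))
      · refine Finset.Subset.antisymm ?_ hXYG
        intro z hz
        rcases Finset.mem_insert.mp (hGS hz) with rfl | h
        · exact absurd hz hvG
        · exact h
    have hc1 : (X ∪ Y).card ≤ B.card :=
      card_le_of_maximal hM S B (X ∪ Y) hBΔ hBS hBmax hXYmem hXYS
    have hc2 : B.card ≤ (X ∪ Y).card :=
      card_le_of_maximal hM S (X ∪ Y) B hXYmem hXYS hXYmax hBΔ hBS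
    -- x' ∈ X \ B, y' ∈ Y \ B
    have hnXB : ¬ X ⊆ B := by
      intro h
      exact hvXins (hΔ.2 B hBΔ _ (Finset.insert_subset (hWB (Finset.mem_insert_self _ _)) h))
    have hnYB : ¬ Y ⊆ B := by
      intro h
      exact hvYins (hΔ.2 B hBΔ _ (Finset.insert_subset (hWB (Finset.mem_insert_self _ _)) h))
    obtain ⟨x', hx'X, hx'B⟩ := Finset.not_subset.mp hnXB
    obtain ⟨y', hy'Y, hy'B⟩ := Finset.not_subset.mp hnYB
    have hx'Y : x' ∉ Y := by
      intro h
      exact hx'B (hWB (Finset.mem_insert_of_mem (Finset.mem_inter.mpr ⟨hx'X, h⟩)))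
    have hne' : x' ≠ y' := fun h => hx'Y (h ▸ hy'Y)
    have hx'S : x' ∈ S := hXYS (Finset.mem_union_left _ hx'X)
    have hy'S : y' ∈ S.erase x' := Finset.mem_erase.mpr ⟨fun h => hne' h.symm, hXYS (Finset.mem_union_right _ hy'Y)⟩
    have hBsub : B ⊆ (S.erase x').erase y' := by
      intro z hz
      refine Finset.mem_erase.mpr ⟨fun h => hy'B (h ▸ hz), Finset.mem_erase.mpr
        ⟨fun h => hx'B (h ▸ hz), hBS hz⟩⟩
    have h1 : B.card ≤ ((S.erase x').erase y').card := Finset.card_le_card hBsub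
    have h2 : ((S.erase x').erase y').card = (S.erase x').card - 1 := Finset.card_erase_of_mem hy'S
    have h3 : (S.erase x').card = S.card - 1 := Finset.card_erase_of_mem hx'S
    have h4 : S.card = (X ∪ Y).card + 1 := Finset.card_insert_of_notMem hvXY
    have h5 : 0 < (X ∪ Y).card := Finset.card_pos.mpr ⟨x, Finset.mem_union_left _ hxX⟩
    omega
  · -- unique minimal ⇒ matroid
    intro H
    refine ⟨hΔ, ?_⟩
    intro I hI J hJ hcard
    by_contra hcon
    push_neg at hcon
    classical
    obtain ⟨I3, hI3T, hI3min⟩ := Finset.exists_min_image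
      ((I ∪ J).powerset.filter (fun K => K ∈ Δ ∧ J.card < K.card))
      (fun K => (J \ K).card) ⟨I, by
        simp only [Finset.mem_filter, Finset.mem_powerset]
        exact ⟨Finset.subset_union_left, hI, hcard⟩⟩
    simp only [Finset.mem_filter, Finset.mem_powerset] at hI3T
    obtain ⟨hI3sub, hI3Δ, hI3card⟩ := hI3T
    have hI3Jne : (I3 \ J).Nonempty := by
      rw [Finset.sdiff_nonempty]
      intro h
      exact absurd (Finset.card_le_card h) (by omega)
    rcases Finset.eq_empty_or_nonempty (J \ I3) with hJe | ⟨e, he⟩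
    · -- J ⊆ I3 : direct contradiction with hcon
      have hJI3 : J ⊆ I3 := Finset.sdiff_eq_empty_iff_subset.mp hJe
      obtain ⟨v, hv⟩ := hI3Jne
      obtain ⟨hvI3, hvJ⟩ := Finset.mem_sdiff.mp hv
      have hvI : v ∈ I := by
        rcases Finset.mem_union.mp (hI3sub hvI3) with h | h
        · exact h
        · exact absurd h hvJ
      exact hcon v hvI hvJ (hΔ.2 I3 hI3Δ _ (Finset.insert_subset hvI3 hJI3))
    · obtain ⟨heJ, heI3⟩ := Finset.mem_sdiff.mp he
      -- key: for each f ∈ I3 \ J, insert e (I3.erase f) ∉ Δ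
      have key : ∀ f ∈ I3 \ J, insert e (I3.erase f) ∉ Δ := by
        intro f hf hD
        obtain ⟨hfI3, hfJ⟩ := Finset.mem_sdiff.mp hf
        have heE : e ∉ I3.erase f := fun h => heI3 (Finset.mem_of_mem_erase h)
        have hDcard : (insert e (I3.erase f)).card = I3.card := by
          rw [Finset.card_insert_of_notMem heE, Finset.card_erase_of_mem hfI3]
          have : 0 < I3.card := by omega
          omega
        have hDsub : insert e (I3.erase f) ⊆ I ∪ J := by
          refine Finset.insert_subset (Finset.mem_union_right _ heJ) ?_
          exact (Finset.erase_subset _ _).trans hI3sub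
        have hmin := hI3min (insert e (I3.erase f))
          (by simp only [Finset.mem_filter, Finset.mem_powerset]
              exact ⟨hDsub, hD, by omega⟩)
        have hsub2 : J \ insert e (I3.erase f) ⊆ (J \ I3).erase e := by
          intro z hz
          obtain ⟨hzJ, hzD⟩ := Finset.mem_sdiff.mp hz
          simp only [Finset.mem_insert, Finset.mem_erase, not_or, not_and] at hzD
          refine Finset.mem_erase.mpr ⟨hzD.1, Finset.mem_sdiff.mpr ⟨hzJ, fun hzI3 => ?_⟩⟩
          rcases eq_or_ne z f with rfl | hzf
          · exact hfJ hzJ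
          · exact (hzD.2 hzf) hzI3
        have hlt : ((J \ I3).erase e).card < (J \ I3).card := by
          rw [Finset.card_erase_of_mem he]
          have : 0 < (J \ I3).card := Finset.card_pos.mpr ⟨e, he⟩
          omega
        have := Finset.card_le_card hsub2
        omega
      -- I3 ∈ Ndel Δ {e}
      obtain ⟨f0, hf0⟩ := hI3Jne
      have hI3N : I3 ∈ Ndel Δ {e} := by
        refine (ndel_iff Δ e I3).mpr ⟨hI3Δ, heI3, fun h => key f0 hf0 ?_⟩
        exact hΔ.2 _ h _ (Finset.insert_subset_insert e (Finset.erase_subset _ _))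
      obtain ⟨X0, ⟨hX0min, hX0sub⟩, huniq⟩ := H e I3 hI3N
      have hforall : ∀ f ∈ I3 \ J, f ∉ X0 := by
        intro f hf
        have hfI3 := (Finset.mem_sdiff.mp hf).1
        have hEN : I3.erase f ∈ Ndel Δ {e} := (ndel_iff Δ e _).mpr
          ⟨hΔ.2 I3 hI3Δ _ (Finset.erase_subset _ _),
           fun h => heI3 (Finset.mem_of_mem_erase h), key f hf⟩
        obtain ⟨Xf, hXfmin, hXfsub⟩ := exists_minimal_below _ _ hEN
        have : Xf = X0 := huniq Xf ⟨hXfmin, hXfsub.trans (Finset.erase_subset _ _)⟩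
        intro hfX0
        rw [← this] at hfX0
        exact (Finset.mem_erase.mp (hXfsub hfX0)).1 rfl
      have hX0J : X0 ⊆ J := by
        intro z hz
        by_contra hzJ
        exact hforall z (Finset.mem_sdiff.mpr ⟨hX0sub hz, hzJ⟩) hz
      obtain ⟨_, _, hX0ins⟩ := (ndel_iff Δ e X0).mp hX0min.1
      exact hX0ins (hΔ.2 J hJ _ (Finset.insert_subset heJ hX0J))
end

section
/- Let M be a matroid on [n] with no coloops, and let A be an independent set of M. Then the link of A in M, link_M(A) = {F ∈ M : F ∩ A = ∅ and F ∪ A ∈ M}, has no coloops. (A coloop of a matroid is an element contained in every basis.) -/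
lemma card_le_of_basis {n : ℕ} {M : Set (Finset (Fin n))} (hM : IsMatroid M)
    {B F : Finset (Fin n)} (hB : IsBasisOf M B) (hF : F ∈ M) : F.card ≤ B.card := by
  by_contra h
  push_neg at h
  obtain ⟨w, hwF, hwB, hins⟩ := hM.2 F hF B hB.1 h
  have := hB.2 _ hins (Finset.subset_insert _ _)
  exact hwB (this ▸ Finset.mem_insert_self w B)

lemma grow_s13 {n : ℕ} {M : Set (Finset (Fin n))} (hM : IsMatroid M)
    {B0 : Finset (Fin n)} (hB0 : B0 ∈ M) {v : Fin n} (hv : v ∉ B0) :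
    ∀ k (A : Finset (Fin n)), A ∈ M → v ∉ A → B0.card - A.card ≤ k →
    ∃ B', A ⊆ B' ∧ B' ∈ M ∧ v ∉ B' ∧ B0.card ≤ B'.card := by
  intro k
  induction k with
  | zero =>
    intro A hA hvA hle
    exact ⟨A, subset_rfl, hA, hvA, Nat.le_of_sub_eq_zero (Nat.le_zero.mp hle)⟩
  | succ k ih =>
    intro A hA hvA hle
    by_cases h : B0.card ≤ A.card
    · exact ⟨A, subset_rfl, hA, hvA, h⟩
    · push_neg at h
      obtain ⟨w, hwB0, hwA, hins⟩ := hM.2 B0 hB0 A hA h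
      have hvw : v ∉ insert w A := by
        simp only [Finset.mem_insert]
        rintro (rfl | hvA')
        · exact hv hwB0
        · exact hvA hvA'
      have hcard : (insert w A).card = A.card + 1 := Finset.card_insert_of_notMem hwA
      obtain ⟨B', hsub, hB', hvB', hle'⟩ := ih (insert w A) hins hvw (by omega)
      exact ⟨B', (Finset.subset_insert w A).trans hsub, hB', hvB', hle'⟩

theorem stmt13 (n : ℕ) (M : Set (Finset (Fin n))) (hM : IsMatroid M)
    (hcoloop : ∀ v : Fin n, ∃ B, IsBasisOf M B ∧ v ∉ B)
    (A : Finset (Fin n)) (hA : A ∈ M) :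
    ∀ v : Fin n, v ∉ A → ∃ B, IsBasisOf (Link M A) B ∧ v ∉ B := by
  intro v hv
  obtain ⟨B0, hB0, hvB0⟩ := hcoloop v
  obtain ⟨B', hAB', hB'M, hvB', hcard⟩ :=
    grow_s13 hM hB0.1 hvB0 B0.card A hA hv (Nat.sub_le _ _)
  have hcard' : B'.card = B0.card := le_antisymm (card_le_of_basis hM hB0 hB'M) hcard
  have hunion : B' \ A ∪ A = B' := Finset.sdiff_union_of_subset hAB'
  refine ⟨B' \ A, ⟨⟨hM.1.2 B' hB'M _ (Finset.sdiff_subset), Finset.sdiff_inter_self _ _,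
      by rw [hunion]; exact hB'M⟩, ?_⟩, fun hmem => hvB' (Finset.mem_sdiff.mp hmem).1⟩
  rintro F ⟨hFM, hFA, hFAM⟩ hsub
  have hBsub : B' ⊆ F ∪ A := by
    rw [← hunion]
    exact Finset.union_subset_union_left hsub
  have hFAcard : (F ∪ A).card ≤ B'.card := by
    rw [hcard']
    exact card_le_of_basis hM hB0 hFAM
  have heq : F ∪ A = B' := (Finset.eq_of_subset_of_card_le hBsub hFAcard).symm
  apply Finset.Subset.antisymm _ hsub
  rw [Finset.subset_sdiff]
  exact ⟨heq ▸ Finset.subset_union_left, Finset.disjoint_iff_inter_eq_empty.mpr hFA⟩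
end
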